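/- Let m ∈ ℂ with |m| = 1 and let e: ℝ → ℂ be a C¹ map satisfying e'(x) = √2 · m · conj(f(e(x))) for all x ∈ ℝ. Then for every compactly supported C¹ function h: ℝ → ℂ, ∫_ℝ ( |h'(x)|² + D²W(e(x))(h(x), h(x)) ) dx ≥ 0. -/

import Mathlib

open MeasureTheory Complex Filter

/-- `W(z) = |f(z)|²` as a function of two real variables. -/
noncomputable def W (f : ℂ → ℂ) (z : ℂ) : ℝ := ‖f z‖ ^ 2

/-!
Put `g := √2 · conj m · f'(e)`. The flow equation gives `g' = 2 conj(f(e)) f''(e)`, and `|m| = 1`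
gives `|g|² = 2 |f'(e)|²`. Completing the square then writes the integrand as
`|h' - conj(g h)|² + Re (g h²)'`, and the exact derivative integrates to zero because `h` has
compact support.
-/

open scoped ComplexConjugate

noncomputable def reMulL : ℂ →L[ℝ] ℂ →L[ℝ] ℝ :=
  (ContinuousLinearMap.compL ℝ ℂ ℂ ℝ reCLM).comp (ContinuousLinearMap.mul ℝ ℂ)

@[simp]
lemma reMulL_apply (c w : ℂ) : reMulL c w = (c * w).re := rfl

section Hessian

variable {f : ℂ → ℂ}

lemma hasFDerivAt_W (hf : Differentiable ℂ f) (z : ℂ) :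
    HasFDerivAt (W f) (reMulL (2 * conj (f z) * deriv f z)) z := by
  refine (hf z).hasDerivAt.complexToReal_fderiv.norm_sq.congr_fderiv ?_
  ext w
  simp only [smul_apply, ContinuousLinearMap.comp_apply, one_apply_eq_self, smul_eq_mul,
    coe_innerSL_apply, Complex.inner, mul_re, conj_re, mul_im, conj_im, mul_neg, sub_neg_eq_add,
    smul_add, nsmul_eq_mul, Nat.cast_ofNat, reMulL_apply, re_ofNat, im_ofNat, zero_mul, neg_zero,
    sub_zero, add_zero, neg_mul]
  ring

lemma fderiv_fderiv_W_apply (hf : Differentiable ℂ f) (z v w : ℂ) :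
    fderiv ℝ (fderiv ℝ (W f)) z v w =
      2 * ((conj (f z) * deriv (deriv f) z * v + conj (deriv f z * v) * deriv f z) * w).re := by
  have hf' := (hf z).hasDerivAt.complexToReal_fderiv
  have hf'' := (hf.deriv z).hasDerivAt.complexToReal_fderiv
  have hconj : HasFDerivAt (fun z => conj (f z)) _ z :=
    (conjCLE.toContinuousLinearMap.hasFDerivAt (x := f z)).comp z hf'
  have hD2W : HasFDerivAt (fun z => reMulL (2 * conj (f z) * deriv f z)) _ z :=
    reMulL.hasFDerivAt.comp z ((hconj.const_mul 2).mul hf'')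
  have hDW : fderiv ℝ (W f) = fun z => reMulL (2 * conj (f z) * deriv f z) :=
    funext fun z => (hasFDerivAt_W hf z).fderiv
  rw [hDW, hD2W.fderiv]
  simp only [ContinuousLinearMap.comp_add, add_apply, ContinuousLinearMap.comp_apply, smul_apply,
    one_apply_eq_self, smul_eq_mul, ContinuousLinearEquiv.coe_coe, ContinuousAlgEquiv.coeCLE_apply,
    conjCAE_apply, map_mul, reMulL_apply, mul_re, re_ofNat, conj_re, im_ofNat, conj_im, mul_neg,
    zero_mul, neg_zero, sub_zero, mul_im, add_zero, neg_mul, sub_neg_eq_add, neg_neg, add_re, add_im]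
  ring

lemma fderiv_fderiv_W_apply_self (hf : Differentiable ℂ f) (z v : ℂ) :
    fderiv ℝ (fderiv ℝ (W f)) z v v =
      2 * ‖deriv f z‖ ^ 2 * ‖v‖ ^ 2 + (2 * conj (f z) * deriv (deriv f) z * v ^ 2).re := by
  rw [fderiv_fderiv_W_apply hf, Complex.sq_norm, Complex.sq_norm]
  simp only [normSq_apply, mul_re, mul_im, add_re, add_im, conj_re, conj_im, pow_two, re_ofNat,
    im_ofNat]
  ring

end Hessian

lemma norm_sq_add_eq_norm_sub_conj_sq_add (a w g g' : ℂ) :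
    ‖a‖ ^ 2 + ‖g‖ ^ 2 * ‖w‖ ^ 2 + (g' * w ^ 2).re =
      ‖a - conj (g * w)‖ ^ 2 + (g' * w ^ 2 + g * (2 * w * a)).re := by
  rw [Complex.sq_norm, Complex.sq_norm, Complex.sq_norm, Complex.sq_norm]
  simp only [normSq_apply, mul_re, mul_im, add_re, sub_re, sub_im, conj_re,
    conj_im, pow_two, re_ofNat, im_ofNat]
  ring

section CompactSupport

variable {g g' h : ℝ → ℂ}

lemma integrable_of_vanishes_with_deriv {E : Type*} [NormedAddCommGroup E] {F : ℝ → E}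
    (hF : Continuous F) (hsupp : HasCompactSupport h)
    (hF0 : ∀ x, h x = 0 → deriv h x = 0 → F x = 0) : Integrable F :=
  hF.integrable_of_hasCompactSupport <| HasCompactSupport.intro hsupp fun x hx =>
    hF0 x (image_eq_zero_of_notMem_tsupport hx)
      (image_eq_zero_of_notMem_tsupport fun hx' => hx (tsupport_deriv_subset hx'))

variable (hg : ∀ x, HasDerivAt g (g' x) x) (hg' : Continuous g') (hh : ContDiff ℝ 1 h)
  (hsupp : HasCompactSupport h)
include hg hg' hh hsupp

lemma integrable_exact_deriv_mul_sq :
    Integrable fun x => g' x * h x ^ 2 + g x * (2 * h x * deriv h x) := by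
  have := continuous_iff_continuousAt.2 fun x => (hg x).continuousAt
  have := hh.continuous
  have := hh.continuous_deriv le_rfl
  exact integrable_of_vanishes_with_deriv (by fun_prop) hsupp fun x h0 dh0 => by simp [h0, dh0]

lemma integral_re_deriv_mul_sq_eq_zero :
    ∫ x, (g' x * h x ^ 2 + g x * (2 * h x * deriv h x)).re = 0 := by
  have hdh : ∀ x, HasDerivAt h (deriv h x) x :=
    fun x => (hh.differentiable one_ne_zero x).hasDerivAt
  have hφ : ∀ x, HasDerivAt (fun x => g x * h x ^ 2)
      (g' x * h x ^ 2 + g x * (2 * h x * deriv h x)) x := fun x =>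
    ((hg x).mul ((hdh x).pow 2)).congr_deriv (by simp only [Pi.pow_apply]; ring)
  have hφ_int : Integrable fun x => g x * h x ^ 2 :=
    integrable_of_vanishes_with_deriv ((continuous_iff_continuousAt.2 fun x =>
      (hg x).continuousAt).mul (hh.continuous.pow 2)) hsupp fun x h0 _ => by simp [h0]
  have hφ'_int := integrable_exact_deriv_mul_sq hg hg' hh hsupp
  refine (integral_re hφ'_int).trans ?_
  rw [integral_eq_zero_of_hasDerivAt_of_integrable hφ hφ'_int hφ_int, map_zero]

lemma integral_norm_deriv_sq_add_nonneg :
    0 ≤ ∫ x, (‖deriv h x‖ ^ 2 + ‖g x‖ ^ 2 * ‖h x‖ ^ 2 + (g' x * h x ^ 2).re) := by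
  have hsq_int : Integrable fun x => ‖deriv h x - conj (g x * h x)‖ ^ 2 := by
    have := continuous_iff_continuousAt.2 fun x => (hg x).continuousAt
    have := hh.continuous
    have := hh.continuous_deriv le_rfl
    exact integrable_of_vanishes_with_deriv (by fun_prop) hsupp fun x h0 dh0 => by
      simp [h0, dh0]
  have hexact_int : Integrable fun x => (g' x * h x ^ 2 + g x * (2 * h x * deriv h x)).re :=
    (integrable_exact_deriv_mul_sq hg hg' hh hsupp).re
  simp_rw [norm_sq_add_eq_norm_sub_conj_sq_add]
  rw [integral_add hsq_int hexact_int,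
    integral_re_deriv_mul_sq_eq_zero hg hg' hh hsupp, add_zero]
  exact integral_nonneg fun x => by positivity

end CompactSupport

/-- If `|m| = 1` and `e' = √2 m conj(f(e))`, then for every compactly supported `C¹`
function `h : ℝ → ℂ`, the second variation `∫ (|h'|² + D²W(e)(h,h))` is nonnegative. -/
theorem statement9 (f : ℂ → ℂ) (hf : Differentiable ℂ f)
    (m : ℂ) (hm : ‖m‖ = 1) (e : ℝ → ℂ)
    (he : ∀ x : ℝ, HasDerivAt e ((Real.sqrt 2 : ℂ) * m * (starRingEnd ℂ) (f (e x))) x)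
    (h : ℝ → ℂ) (hh : ContDiff ℝ 1 h) (hsupp : HasCompactSupport h) :
    0 ≤ ∫ x : ℝ, (‖deriv h x‖ ^ 2 + fderiv ℝ (fderiv ℝ (W f)) (e x) (h x) (h x)) := by
  set g : ℝ → ℂ := fun x => (Real.sqrt 2 : ℂ) * conj m * deriv f (e x)
  have hsqrt : (Real.sqrt 2 : ℂ) * (Real.sqrt 2 : ℂ) = 2 := by
    rw [← ofReal_mul, Real.mul_self_sqrt zero_le_two, ofReal_ofNat]
  have hm' : conj m * m = 1 := by simp [conj_mul', hm]
  have hg : ∀ x, HasDerivAt g ((2 : ℂ) * conj (f (e x)) * deriv (deriv f) (e x)) x := fun x => by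
    refine (((hf.deriv (e x)).hasDerivAt.comp x (he x)).const_mul
      ((Real.sqrt 2 : ℂ) * conj m)).congr_deriv ?_
    linear_combination (conj (f (e x)) * deriv (deriv f) (e x)) * hsqrt
      + ((Real.sqrt 2 : ℂ) ^ 2 * conj (f (e x)) * deriv (deriv f) (e x)) * hm'
  have hg_norm : ∀ x, ‖g x‖ ^ 2 = 2 * ‖deriv f (e x)‖ ^ 2 := fun x => by
    simp [g, mul_pow, hm]
  have hce : Continuous e := continuous_iff_continuousAt.2 fun x => (he x).continuousAt
  have hg' : Continuous fun x : ℝ => (2 : ℂ) * conj (f (e x)) * deriv (deriv f) (e x) := by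
    have := hf.continuous; have := hf.deriv.deriv.continuous; fun_prop
  convert integral_norm_deriv_sq_add_nonneg hg hg' hh hsupp using 3 with x
  rw [fderiv_fderiv_W_apply_self hf, hg_norm, add_assoc]
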